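/- There is no direction respecting 1-factorization M_1, …, M_6 of the hypercube Q_6 (with respect to the split into directions {1,2,3} and {4,5,6}) such that M_i ∪ M_j is a Hamilton cycle for every i ∈ {1, 2, 3} and j ∈ {4, 5, 6}. -/

import Mathlib

open SimpleGraph

/-- The hypercube graph `Q_d`: vertices are subsets of `{1,…,d}`, two subsets adjacent
iff they differ in exactly one element. -/
def cube (d : ℕ) : SimpleGraph (Finset (Fin d)) where
  Adj u v := (symmDiff u v).card = 1
  symm := ⟨fun u v h => by rwa [symmDiff_comm] at h⟩
  loopless := ⟨fun u h => by simp [symmDiff_self] at h⟩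

/-- `M` is a perfect matching of `G` (as a set of edges): `M` consists of edges of `G`
and every vertex lies in a unique edge of `M`. -/
def IsPM {V : Type*} (G : SimpleGraph V) (M : Set (Sym2 V)) : Prop :=
  M ⊆ G.edgeSet ∧ ∀ v : V, ∃! e, e ∈ M ∧ v ∈ e

/-- `M` is a 1-factorization of `G`: a partition of the edge set of `G` into
perfect matchings. -/
def IsFactorization {V : Type*} {ι : Type*} (G : SimpleGraph V) (M : ι → Set (Sym2 V)) : Prop :=
  (∀ i, IsPM G (M i)) ∧ (∀ i j, i ≠ j → Disjoint (M i) (M j)) ∧ (⋃ i, M i) = G.edgeSet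

/-- The edge set `E` forms a Hamilton cycle: there is a Hamiltonian cycle in the graph
with edge set `E` which uses every edge of `E`. -/
def IsHamCycleSet {V : Type*} [DecidableEq V] (E : Set (Sym2 V)) : Prop :=
  ∃ (v : V) (w : (SimpleGraph.fromEdgeSet E).Walk v v),
    w.IsHamiltonianCycle ∧ ∀ e ∈ E, e ∈ w.edges

/-- The directional matching `D_i` of `Q_d`: all edges in direction `i`, i.e. whose
endpoints differ exactly in the element `i`. -/
def dirMatching (d : ℕ) (i : Fin d) : Set (Sym2 (Finset (Fin d))) :=
  {e | ∃ u v : Finset (Fin d), e = s(u, v) ∧ symmDiff u v = {i}}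

/-- The edge set `M` only uses edges in directions belonging to `S`. -/
def UsesDirections {d : ℕ} (M : Set (Sym2 (Finset (Fin d)))) (S : Set (Fin d)) : Prop :=
  ∀ u v : Finset (Fin d), s(u, v) ∈ M → ∀ i ∈ symmDiff u v, i ∈ S

/-- A 1-factorization of `Q_{k+l}` is direction respecting (w.r.t. the split `k + l`)
if the first `k` matchings use only the first `k` directions and the last `l` matchings
use only the last `l` directions. -/
def DirectionRespecting (k l : ℕ) (M : Fin (k + l) → Set (Sym2 (Finset (Fin (k + l))))) : Prop :=
  ∀ i : Fin (k + l), UsesDirections (M i) {j : Fin (k + l) | ((j : ℕ) < k ↔ (i : ℕ) < k)}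

/-!
Let `f i` be the involution of the vertex set exchanging the two ends of each edge of `M i`,
`Δ a` the involution flipping coordinate `a` (directions are numbered `0, …, 5`), and restrict
products of two parity-swapping involutions to the 32 even vertices. If `M i ∪ M j` is a Hamilton
cycle, `f j ∘ f i` is a single 32-cycle on the even vertices, hence odd. Writing
`f j ∘ f i = (f j ∘ Δ 3) ∘ (Δ 3 ∘ Δ 0) ∘ (Δ 0 ∘ f i)`, where the middle factor is even and
`Δ 0 ∘ f i` has the sign of its inverse `f i ∘ Δ 0`, gives
`sign (f j ∘ Δ 3) * sign (f i ∘ Δ 0) = -1` for all nine pairs `i < 3 ≤ j`.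
For `i < 3` the map `f i ∘ Δ 0` keeps coordinates `3, 4, 5` fixed, so it acts on the eight copies
of `Q₃` separately, and on each copy the three maps coming from `f 0, f 1, f 2` have signs
multiplying to `1` (a finite check); so `∏ i, sign (f i ∘ Δ 0) = 1`, and likewise
`∏ j, sign (f j ∘ Δ 3) = 1`. Multiplying the nine relations gives `1 = (-1) ^ 9`.
-/

open Equiv Equiv.Perm Function
open scoped symmDiff

section PerfectMatching

variable {V : Type*} {G : SimpleGraph V}

namespace IsPM

variable {M : Set (Sym2 V)}

theorem exists_mk_mem (hM : IsPM G M) (v : V) : ∃ w, s(v, w) ∈ M := by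
  obtain ⟨e, ⟨he, hv⟩, -⟩ := hM.2 v
  exact ⟨Sym2.Mem.other hv, by rwa [Sym2.other_spec]⟩

noncomputable def partner (hM : IsPM G M) (v : V) : V :=
  (hM.exists_mk_mem v).choose

theorem mk_partner_mem (hM : IsPM G M) (v : V) : s(v, hM.partner v) ∈ M :=
  (hM.exists_mk_mem v).choose_spec

theorem eq_partner_of_mk_mem (hM : IsPM G M) {v w : V} (h : s(v, w) ∈ M) :
    w = hM.partner v :=
  Sym2.congr_right.mp <|
    (hM.2 v).unique ⟨h, Sym2.mem_mk_left _ _⟩ ⟨hM.mk_partner_mem v, Sym2.mem_mk_left _ _⟩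

theorem partner_involutive (hM : IsPM G M) : Involutive hM.partner := fun v =>
  (hM.eq_partner_of_mk_mem (Sym2.eq_swap ▸ hM.mk_partner_mem v)).symm

theorem eq_partner_of_adj_fromEdgeSet_union {N : Set (Sym2 V)} (hM : IsPM G M)
    (hN : IsPM G N) {u w : V} (h : (fromEdgeSet (M ∪ N)).Adj u w) :
    w = hM.partner u ∨ w = hN.partner u :=
  ((fromEdgeSet_adj _).1 h).1.imp hM.eq_partner_of_mk_mem hN.eq_partner_of_mk_mem

end IsPM

theorem IsFactorization.partner_injective {ι : Type*} {M : ι → Set (Sym2 V)}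
    (hM : IsFactorization G M) (v : V) : Injective fun i => (hM.1 i).partner v := by
  intro i j (h : (hM.1 i).partner v = (hM.1 j).partner v)
  by_contra hij
  exact Set.disjoint_left.mp (hM.2.1 i j hij) ((hM.1 i).mk_partner_mem v)
    (h ▸ (hM.1 j).mk_partner_mem v)

theorem IsHamCycleSet.connected [Fintype V] [DecidableEq V] {E : Set (Sym2 V)}
    (h : IsHamCycleSet E) : (fromEdgeSet E).Connected := by
  obtain ⟨v, w, hw, -⟩ := h
  exact IsHamiltonian.connected fun _ => ⟨v, w, hw⟩

end PerfectMatching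

namespace Equiv.Perm

section Sign

variable {α : Type*} [Fintype α] [DecidableEq α]

theorem sign_eq_prod_sign_subtypePerm_fiber {ι : Type*} [Fintype ι] [DecidableEq ι]
    (σ : Perm α) (P : α → ι) (hP : ∀ x, P (σ x) = P x) :
    sign σ = ∏ c, sign (σ.subtypePerm (p := fun x => P x = c) fun x => by rw [hP]) := by
  have key : ∀ s : Finset ι,
      sign (ofSubtype (σ.subtypePerm (p := fun x => P x ∈ s) fun x => by rw [hP])) =
        ∏ c ∈ s, sign (σ.subtypePerm (p := fun x => P x = c) fun x => by rw [hP]) := by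
    intro s
    induction s using Finset.induction_on with
    | empty =>
      have : IsEmpty {x // P x ∈ (∅ : Finset ι)} := ⟨fun x => Finset.notMem_empty _ x.2⟩
      simp [Subsingleton.elim (σ.subtypePerm _) 1]
    | insert c s hc ih =>
      rw [Finset.prod_insert hc, ← ih, ← sign_ofSubtype, ← map_mul]
      congr 1
      ext x
      by_cases hxc : P x = c
      · simp [ofSubtype_apply_of_mem, ofSubtype_apply_of_not_mem, hxc, hc]
      · by_cases hxs : P x ∈ s <;>
          simp [ofSubtype_apply_of_mem, ofSubtype_apply_of_not_mem, hxc, hxs, hP]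
  rw [← key, ofSubtype_subtypePerm _ fun x _ => Finset.mem_univ _]

theorem sign_of_forall_sameCycle [Nontrivial α] {σ : Perm α}
    (h : ∀ x y, σ.SameCycle x y) : sign σ = -(-1) ^ Fintype.card α := by
  have hmoves : ∀ x, σ x ≠ x := fun x hx => by
    obtain ⟨y, hy⟩ := exists_ne x
    exact hy ((h x y).eq_of_left hx).symm
  obtain ⟨x⟩ := (inferInstance : Nonempty α)
  have hsupp : σ.support = Finset.univ :=
    Finset.eq_univ_of_forall fun y => mem_support.2 (hmoves y)
  rw [IsCycle.sign ⟨x, hmoves x, fun y _ => h x y⟩, hsupp, Finset.card_univ]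

end Sign

theorem sameCycle_subtypePerm_mul_of_connected {V : Type*} {G : SimpleGraph V}
    (hG : G.Connected) {f g : Perm V} (hf : Involutive f) (hg : Involutive g) {p : V → Prop}
    (hfp : ∀ v, p (f v) ↔ ¬ p v) (hgp : ∀ v, p (g v) ↔ ¬ p v)
    (hadj : ∀ u w, G.Adj u w → w = f u ∨ w = g u) (h : ∀ v, p ((g * f) v) ↔ p v)
    (x y : Subtype p) : ((g * f).subtypePerm h).SameCycle x y := by
  classical
  set R := (g * f).subtypePerm h
  -- `rep u` is `u` or its `g`-partner, whichever lies on the side `p`: along an `f`-edge `rep`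
  -- advances by one step of `R`, along a `g`-edge it does not move.
  let rep : V → Subtype p := fun u => if hu : p u then ⟨u, hu⟩ else ⟨g u, (hgp u).2 hu⟩
  have rep_of_mem : ∀ u (hu : p u), rep u = ⟨u, hu⟩ := fun u hu => dif_pos hu
  have rep_g : ∀ u, rep (g u) = rep u := by
    intro u
    by_cases hu : p u
    · simp [rep, hu, hgp, hg u]
    · simp [rep, hu, hgp]
  have rep_f : ∀ u, p u → rep (f u) = R (rep u) := by
    intro u hu
    simp [rep, R, hu, hfp]
  have step : ∀ u w, G.Adj u w → R.SameCycle (rep u) (rep w) := by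
    rintro u w huw
    rcases hadj u w huw with rfl | rfl
    · by_cases hu : p u
      · rw [rep_f u hu]
        exact (SameCycle.refl _ _).apply_right
      · have hfu := rep_f (f u) ((hfp u).2 hu)
        rw [hf u] at hfu
        rw [hfu]
        exact ((SameCycle.refl _ _).apply_right).symm
    · rw [rep_g]
  have walk : ∀ u w (q : G.Walk u w), R.SameCycle (rep u) (rep w) := by
    intro u w q
    induction q with
    | nil => rfl
    | cons huv _ ih => exact (step _ _ huv).trans ih
  obtain ⟨q⟩ := hG.preconnected x y
  have hxy := walk _ _ q
  rwa [rep_of_mem _ x.2, rep_of_mem _ y.2] at hxy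

end Equiv.Perm

section Parity

variable {α : Type*}

def SwapsParity (σ : Perm (Finset α)) : Prop :=
  ∀ s, Even (σ s).card ↔ ¬ Even s.card

def evenComp (σ τ : Perm (Finset α)) (hσ : SwapsParity σ) (hτ : SwapsParity τ) :
    Perm {s : Finset α // Even s.card} :=
  (σ * τ).subtypePerm fun s => by rw [mul_apply, hσ, hτ, not_not]

variable {σ τ ρ : Perm (Finset α)} (hσ : SwapsParity σ) (hτ : SwapsParity τ)
  (hρ : SwapsParity ρ)

theorem evenComp_mul_evenComp (hτ' : Involutive τ) :
    evenComp σ τ hσ hτ * evenComp τ ρ hτ hρ = evenComp σ ρ hσ hρ :=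
  Equiv.ext fun s => Subtype.ext (congrArg σ (hτ' (ρ s)))

theorem evenComp_self (hσ' : Involutive σ) : evenComp σ σ hσ hσ = 1 :=
  Equiv.ext fun s => Subtype.ext (hσ' s)

theorem sign_evenComp_comm [Fintype α] [DecidableEq α] (hσ' : Involutive σ)
    (hτ' : Involutive τ) : sign (evenComp σ τ hσ hτ) = sign (evenComp τ σ hτ hσ) := by
  have h : evenComp σ τ hσ hτ * evenComp τ σ hτ hσ = 1 := by
    rw [evenComp_mul_evenComp hσ hτ hσ hτ', evenComp_self hσ hσ']
  rw [eq_inv_of_mul_eq_one_right h, sign_inv]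

end Parity

section CoordinateFlip

variable {α : Type*} [DecidableEq α]

theorem even_card_symmDiff_singleton_iff (s : Finset α) (a : α) :
    Even (s ∆ {a}).card ↔ ¬ Even s.card := by
  by_cases ha : a ∈ s
  · have hs : s ∆ {a} = s.erase a := by
      ext b; by_cases hb : b = a <;> simp [Finset.mem_symmDiff, hb, ha]
    rw [hs, ← Finset.card_erase_add_one ha, Nat.even_add_one, not_not]
  · have hs : s ∆ {a} = insert a s := by
      ext b; by_cases hb : b = a <;> simp [Finset.mem_symmDiff, hb, ha]
    rw [hs, Finset.card_insert_of_notMem ha, Nat.even_add_one]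

def IsCoordinateFlip (S : Set α) (σ : Perm (Finset α)) : Prop :=
  ∀ s, ∃ a ∈ S, σ s = s ∆ {a}

theorem IsCoordinateFlip.swapsParity {S : Set α} {σ : Perm (Finset α)}
    (hσ : IsCoordinateFlip S σ) : SwapsParity σ := fun s => by
  obtain ⟨a, -, ha⟩ := hσ s
  rw [ha, even_card_symmDiff_singleton_iff]

theorem IsCoordinateFlip.mono {S T : Set α} {σ : Perm (Finset α)} (hσ : IsCoordinateFlip S σ)
    (hST : S ⊆ T) : IsCoordinateFlip T σ := fun s =>
  (hσ s).imp fun _ ha => ⟨hST ha.1, ha.2⟩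

def flipAt (a : α) : Perm (Finset α) :=
  (symmDiff_left_involutive {a}).toPerm

theorem involutive_flipAt (a : α) : Involutive (flipAt a) :=
  symmDiff_left_involutive {a}

theorem swapsParity_flipAt (a : α) : SwapsParity (flipAt a) := fun s =>
  even_card_symmDiff_singleton_iff s a

theorem IsPM.isCoordinateFlip {d : ℕ} {M : Set (Sym2 (Finset (Fin d)))} {S : Set (Fin d)}
    (hM : IsPM (cube d) M) (hS : UsesDirections M S) :
    IsCoordinateFlip S hM.partner_involutive.toPerm := by
  intro v
  obtain ⟨a, ha⟩ := Finset.card_eq_one.mp (hM.1 (hM.mk_partner_mem v))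
  refine ⟨a, hS v _ (hM.mk_partner_mem v) a (by simp [ha]), ?_⟩
  rw [← ha, symmDiff_symmDiff_cancel_left]
  rfl

end CoordinateFlip

section FiberSign

variable {α : Type*} [Fintype α] [DecidableEq α]

/-- On every fibre of `x ↦ x ∩ Sᶜ` on the even sets, any three permutations moving each `x` to
three distinct neighbours of `x ∆ {z}` have signs multiplying to `1`. -/
def FiberSignCondition (S : Finset α) (z : α) : Prop :=
  ∀ c, ∀ π₁ : Perm {x : {s : Finset α // Even s.card} // x.1 ∩ Sᶜ = c},
    (∀ x, (x.1.1 ∆ {z} ∆ (π₁ x).1.1).card = 1) →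
    ∀ π₂ : Perm {x : {s : Finset α // Even s.card} // x.1 ∩ Sᶜ = c},
    (∀ x, (x.1.1 ∆ {z} ∆ (π₂ x).1.1).card = 1 ∧ π₂ x ≠ π₁ x) →
    ∀ π₃ : Perm {x : {s : Finset α // Even s.card} // x.1 ∩ Sᶜ = c},
    (∀ x, (x.1.1 ∆ {z} ∆ (π₃ x).1.1).card = 1 ∧ π₃ x ≠ π₁ x ∧ π₃ x ≠ π₂ x) →
    sign π₁ * sign π₂ * sign π₃ = 1

theorem prod_sign_evenComp_flipAt_eq_one {S : Finset α} {z : α} (hS : FiberSignCondition S z)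
    (hz : z ∈ S) {g : Fin 3 → Perm (Finset α)} (hg : ∀ k, IsCoordinateFlip S (g k))
    (hinj : ∀ s, Injective (g · s)) :
    ∏ k, sign (evenComp (g k) (flipAt z) (hg k).swapsParity (swapsParity_flipAt z)) = 1 := by
  set σ := fun k => evenComp (g k) (flipAt z) (hg k).swapsParity (swapsParity_flipAt z)
  have hσ : ∀ k x, ∃ a ∈ S, (σ k x).1 = x.1 ∆ {z} ∆ {a} := fun k x => hg k (x.1 ∆ {z})
  have hfiber : ∀ k x, (σ k x).1 ∩ Sᶜ = x.1 ∩ Sᶜ := by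
    intro k x
    obtain ⟨a, ha, hσa⟩ := hσ k x
    rw [hσa]
    ext y
    by_cases hy : y ∈ S
    · simp [hy]
    · simp [Finset.mem_symmDiff, hy, (ne_of_mem_of_not_mem ha hy).symm,
        (ne_of_mem_of_not_mem hz hy).symm]
  have hflip : ∀ k x, (x.1 ∆ {z} ∆ (σ k x).1).card = 1 := by
    intro k x
    obtain ⟨a, -, hσa⟩ := hσ k x
    rw [hσa, symmDiff_symmDiff_cancel_left, Finset.card_singleton]
  rw [Finset.prod_congr rfl fun k _ =>
    sign_eq_prod_sign_subtypePerm_fiber (σ k) (fun x => x.1 ∩ Sᶜ) (hfiber k), Finset.prod_comm]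
  refine Finset.prod_eq_one fun c _ => ?_
  let π : Fin 3 → Perm {x : {s : Finset α // Even s.card} // x.1 ∩ Sᶜ = c} :=
    fun k => (σ k).subtypePerm fun x => by rw [hfiber]
  have hne : ∀ k l, k ≠ l → ∀ x, π k x ≠ π l x := fun k l hkl x h =>
    hkl (hinj _ (congrArg (fun y => y.1.1) h))
  rw [Fin.prod_univ_three]
  exact hS c (π 0) (fun x => hflip 0 x) (π 1) (fun x => ⟨hflip 1 x, hne 1 0 (by decide) x⟩)
    (π 2) (fun x => ⟨hflip 2 x, hne 2 0 (by decide) x, hne 2 1 (by decide) x⟩)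

end FiberSign

theorem Int.units_not_forall_mul_eq_neg_one {ι κ : Type*} [Fintype ι] [Fintype κ]
    (hι : Odd (Fintype.card ι)) (hκ : Odd (Fintype.card κ)) {a : ι → ℤˣ} {t : κ → ℤˣ}
    (ha : ∏ i, a i = 1) (ht : ∏ k, t k = 1) : ¬ ∀ i k, t k * a i = -1 := by
  intro h
  have hprod : ∏ k, ∏ i, (t k * a i) = 1 := by
    simp [Finset.prod_mul_distrib, Finset.prod_pow, ha, ht]
  simp only [h, Finset.prod_const, Finset.card_univ, hι.neg_one_pow, hκ.neg_one_pow] at hprod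
  exact absurd hprod (by decide : (-1 : ℤˣ) ≠ 1)

section Q6

set_option synthInstance.maxHeartbeats 400000 in
set_option synthInstance.maxSize 1024 in
theorem fiberSignCondition_012 : FiberSignCondition ({0, 1, 2} : Finset (Fin 6)) 0 := by
  unfold FiberSignCondition
  decide +kernel

set_option synthInstance.maxHeartbeats 400000 in
set_option synthInstance.maxSize 1024 in
theorem fiberSignCondition_345 : FiberSignCondition ({3, 4, 5} : Finset (Fin 6)) 3 := by
  unfold FiberSignCondition
  decide +kernel

-- a fixed-point-free involution of the 32 even sets, i.e. a product of 16 transpositions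
theorem sign_evenComp_flipAt_three_flipAt_zero :
    sign (evenComp (flipAt (3 : Fin 6)) (flipAt 0) (swapsParity_flipAt 3)
      (swapsParity_flipAt 0)) = 1 := by
  decide

variable {f g : Perm (Finset (Fin 6))} (hf : SwapsParity f) (hg : SwapsParity g)

theorem sign_evenComp_eq_mul (hf' : Involutive f) :
    sign (evenComp g f hg hf) = sign (evenComp g (flipAt 3) hg (swapsParity_flipAt 3)) *
      sign (evenComp f (flipAt 0) hf (swapsParity_flipAt 0)) := by
  rw [← evenComp_mul_evenComp hg (swapsParity_flipAt 3) hf (involutive_flipAt 3),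
    ← evenComp_mul_evenComp (swapsParity_flipAt 3) (swapsParity_flipAt 0) hf
      (involutive_flipAt 0), map_mul, map_mul, sign_evenComp_flipAt_three_flipAt_zero, one_mul,
    sign_evenComp_comm (swapsParity_flipAt 0) hf (involutive_flipAt 0) hf']

theorem sign_evenComp_eq_neg_one (hf' : Involutive f) (hg' : Involutive g)
    {G : SimpleGraph (Finset (Fin 6))} (hG : G.Connected)
    (hadj : ∀ u w, G.Adj u w → w = f u ∨ w = g u) : sign (evenComp g f hg hf) = -1 := by
  have hcard : Fintype.card {s : Finset (Fin 6) // Even s.card} = 32 := by decide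
  have : Nontrivial {s : Finset (Fin 6) // Even s.card} :=
    Fintype.one_lt_card_iff_nontrivial.mp (by rw [hcard]; norm_num)
  have hcycle : ∀ x y, (evenComp g f hg hf).SameCycle x y :=
    sameCycle_subtypePerm_mul_of_connected (p := fun s => Even s.card) hG hf' hg' hf hg hadj _
  rw [sign_of_forall_sameCycle hcycle, hcard]
  decide

end Q6

/-- There is no direction respecting 1-factorization `M₁, …, M₆` of `Q₆` (w.r.t. the
split `3 + 3`) such that `M_i ∪ M_j` is a Hamilton cycle for all `i ∈ {1,2,3}`,
`j ∈ {4,5,6}`. -/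
theorem statement10 :
    ¬ ∃ M : Fin (3 + 3) → Set (Sym2 (Finset (Fin (3 + 3)))),
        IsFactorization (cube (3 + 3)) M ∧ DirectionRespecting 3 3 M ∧
        ∀ i j : Fin (3 + 3), (i : ℕ) < 3 → 3 ≤ (j : ℕ) →
          IsHamCycleSet (M i ∪ M j) := by
  rintro ⟨M, hM, hdir, hham⟩
  let f : Fin 6 → Perm (Finset (Fin 6)) := fun i => (hM.1 i).partner_involutive.toPerm
  have hflip : ∀ i : Fin 6, IsCoordinateFlip {j : Fin 6 | ((j : ℕ) < 3 ↔ (i : ℕ) < 3)} (f i) :=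
    fun i => (hM.1 i).isCoordinateFlip (hdir i)
  have hlow : ∀ j : Fin 6, (j : ℕ) < 3 → j ∈ ({0, 1, 2} : Finset (Fin 6)) := by decide
  have hhigh : ∀ j : Fin 6, ¬ (j : ℕ) < 3 → j ∈ ({3, 4, 5} : Finset (Fin 6)) := by decide
  have hleft : ∀ k : Fin 3,
      IsCoordinateFlip ↑({0, 1, 2} : Finset (Fin 6)) (f (Fin.castAdd 3 k)) :=
    fun k => (hflip _).mono fun j hj => hlow j (hj.2 k.isLt)
  have hright : ∀ k : Fin 3,
      IsCoordinateFlip ↑({3, 4, 5} : Finset (Fin 6)) (f (Fin.natAdd 3 k)) :=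
    fun k => (hflip _).mono fun j hj => hhigh j fun h => by simpa using hj.1 h
  refine Int.units_not_forall_mul_eq_neg_one (by decide) (by decide)
    (prod_sign_evenComp_flipAt_eq_one fiberSignCondition_012 (by decide) hleft
      fun v => (hM.partner_injective v).comp (Fin.castAdd_injective 3 3))
    (prod_sign_evenComp_flipAt_eq_one fiberSignCondition_345 (by decide) hright
      fun v => (hM.partner_injective v).comp (Fin.natAdd_injective 3 3)) fun k l => ?_
  rw [← sign_evenComp_eq_mul _ _ (hM.1 _).partner_involutive]
  exact sign_evenComp_eq_neg_one _ _ (hM.1 _).partner_involutive (hM.1 _).partner_involutive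
    (hham _ _ k.isLt (Nat.le_add_right 3 l)).connected
    fun u w h => (hM.1 _).eq_partner_of_adj_fromEdgeSet_union (hM.1 _) h
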